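/- arXiv:gr-qc/0310091 — 2 statements merged into one kernel-verified Lean document; each statement's English description precedes it below -/
import Mathlib

section
/- Let θ : [0,∞) → [0,∞) have uniformly bounded derivative, and suppose for some ε ∈ (0, 1/3) there exist constants C₁, C₂, T such that for all t > T: ∫₀^t θ(τ)² dτ ≤ C₁ + C₂ t^ε θ(t)^{1-ε}. Then there exists a sequence t_i → ∞ with t_i^ε θ(t_i)^{1-ε} → 0. -/
open Filter

set_option maxHeartbeats 1000000 in
/-- Bootstrap decay lemma: if `θ ≥ 0` has uniformly bounded derivative and for some
`ε ∈ (0,1/3)` satisfies `∫₀^t θ² ≤ C₁ + C₂ t^ε θ(t)^{1-ε}` for all `t > T`, then there is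
a sequence `t_i → ∞` with `t_i^ε θ(t_i)^{1-ε} → 0`. -/
theorem stmt15 (θ θ' : ℝ → ℝ) (hθ0 : ∀ t : ℝ, 0 ≤ t → 0 ≤ θ t)
    (hder : ∀ t : ℝ, 0 ≤ t → HasDerivAt θ (θ' t) t)
    (Cb : ℝ) (hCb : ∀ t : ℝ, 0 ≤ t → |θ' t| ≤ Cb)
    (ε C₁ C₂ T : ℝ) (hε0 : 0 < ε) (hε : ε < 1 / 3)
    (hI : ∀ t : ℝ, T < t → ∫ τ in (0:ℝ)..t, (θ τ) ^ 2 ≤ C₁ + C₂ * t ^ ε * (θ t) ^ (1 - ε)) :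
    ∃ t : ℕ → ℝ, Tendsto t atTop atTop ∧
      Tendsto (fun i => (t i) ^ ε * (θ (t i)) ^ (1 - ε)) atTop (nhds 0) := by
  have hε' : ε < 1/3 := by linarith
  set F : ℝ → ℝ := fun t => ∫ τ in (0:ℝ)..t, θ τ ^ 2 with hFdef
  have hcont : ContinuousOn (fun τ => θ τ ^ 2) (Set.Ici 0) := fun t ht =>
    (((hder t ht).continuousAt).continuousWithinAt).pow 2
  have hint : ∀ s t : ℝ, 0 ≤ s → 0 ≤ t →
      IntervalIntegrable (fun τ => θ τ ^ 2) MeasureTheory.volume s t := by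
    intro s t hs ht
    refine (hcont.mono ?_).intervalIntegrable
    intro x hx
    exact le_trans (le_inf hs ht) hx.1
  have hdiff : ∀ s t : ℝ, 0 ≤ s → s ≤ t → F t - F s = ∫ τ in s..t, θ τ ^ 2 := by
    intro s t hs hst
    simp only [hFdef]
    rw [← intervalIntegral.integral_add_adjacent_intervals (hint 0 s le_rfl hs)
      (hint s t hs (hs.trans hst))]
    ring
  have hmono : ∀ s t : ℝ, 0 ≤ s → s ≤ t → F s ≤ F t := by
    intro s t hs hst
    nlinarith [intervalIntegral.integral_nonneg (μ := MeasureTheory.volume) hst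
      (fun u _ => sq_nonneg (θ u)), hdiff s t hs hst]
  have hFTC : ∀ t : ℝ, 0 < t → HasDerivAt F (θ t ^ 2) t := by
    intro t ht
    refine intervalIntegral.integral_hasDerivAt_right (hint 0 t le_rfl ht.le) ?_ ?_
    · exact ContinuousOn.stronglyMeasurableAtFilter isOpen_Ioi
        (hcont.mono Set.Ioi_subset_Ici_self) t ht
    · exact ((hder t ht.le).continuousAt).pow 2
  have hIF : ∀ t : ℝ, T < t → F t ≤ C₁ + C₂ * t ^ ε * (θ t) ^ (1 - ε) := hI
  by_cases hB : ∃ M : ℝ, ∀ t : ℝ, 0 ≤ t → F t ≤ M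
  · obtain ⟨M, hM⟩ := hB
    clear hI hIF hFTC hder hCb hcont
    have key : ∀ n : ℕ, ∃ t : ℝ, (n : ℝ) + 1 ≤ t ∧ t * θ t ^ 2 < ((n : ℝ) + 1)⁻¹ := by
      intro n
      by_contra hcon
      push_neg at hcon
      set s : ℝ := (n : ℝ) + 1 with hs
      have hs1 : (1:ℝ) ≤ s := by rw [hs]; have : (0:ℝ) ≤ (n:ℝ) := Nat.cast_nonneg n; linarith
      have hs0 : (0:ℝ) < s := by linarith
      set δ : ℝ := ((n : ℝ) + 1)⁻¹ with hδ
      have hδ0 : 0 < δ := by positivity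
      -- for t ≥ s, F t ≥ F s + δ * log (t/s)
      have grow : ∀ t : ℝ, s ≤ t → F s + δ * Real.log (t / s) ≤ F t := by
        intro t hts
        have ht0 : (0:ℝ) < t := lt_of_lt_of_le hs0 hts
        have hlog : ∫ τ in s..t, δ * τ⁻¹ = δ * Real.log (t / s) := by
          rw [intervalIntegral.integral_const_mul, integral_inv]
          intro hx
          have := (Set.mem_uIcc.mp hx)
          rcases this with ⟨h1, _⟩ | ⟨h1, h2⟩
          · linarith
          · linarith
        have hmono' : ∫ τ in s..t, δ * τ⁻¹ ≤ ∫ τ in s..t, θ τ ^ 2 := by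
          refine intervalIntegral.integral_mono_on hts ?_ (hint s t hs0.le ht0.le) ?_
          · apply ContinuousOn.intervalIntegrable
            apply ContinuousOn.mul continuousOn_const
            apply ContinuousOn.inv₀ continuousOn_id
            intro x hx
            rw [Set.uIcc_of_le hts] at hx
            exact ne_of_gt (lt_of_lt_of_le hs0 hx.1)
          · intro x hx
            have hx0 : 0 < x := lt_of_lt_of_le hs0 hx.1
            have h := hcon x hx.1
            have hxi : 0 < x⁻¹ := inv_pos.mpr hx0
            nlinarith [mul_le_mul_of_nonneg_right h hxi.le, mul_inv_cancel₀ hx0.ne']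
        have := hdiff s t hs0.le hts
        linarith [hlog ▸ hmono']
      -- choose t large to contradict F t ≤ M
      set t₀ : ℝ := s * Real.exp ((M - F s + 1) / δ) with ht₀
      have hexp1 : (1:ℝ) ≤ Real.exp ((M - F s + 1) / δ) := by
        rw [Real.one_le_exp_iff]
        have : F s ≤ M := hM s hs0.le
        exact div_nonneg (by linarith) hδ0.le
      have hst₀ : s ≤ t₀ := le_mul_of_one_le_right hs0.le hexp1
      have h1 := grow t₀ hst₀
      have h2 : Real.log (t₀ / s) = (M - F s + 1) / δ := by
        have he : t₀ / s = Real.exp ((M - F s + 1) / δ) := by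
          rw [ht₀]; field_simp
        rw [he, Real.log_exp]
      rw [h2] at h1
      have h3 : δ * ((M - F s + 1) / δ) = M - F s + 1 := by
        field_simp
      rw [h3] at h1
      have := hM t₀ (le_trans hs0.le hst₀)
      linarith
    choose t ht1 ht2 using key
    refine ⟨t, ?_, ?_⟩
    · exact tendsto_atTop_mono (fun n => by linarith [ht1 n] : ∀ n : ℕ, (n:ℝ) ≤ t n)
        tendsto_natCast_atTop_atTop
    · -- squeeze
      have hub : ∀ n : ℕ, t n ^ ε * θ (t n) ^ (1 - ε) ≤ (((n:ℝ) + 1)⁻¹) ^ ((1 - ε)/2) := by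
        intro n
        have hx1 : (1:ℝ) ≤ t n := le_trans (by nlinarith [Nat.cast_nonneg (α := ℝ) n]) (ht1 n)
        have hx0 : (0:ℝ) ≤ t n := by linarith
        have hy0 : 0 ≤ θ (t n) := hθ0 _ hx0
        have key1 : (t n * θ (t n) ^ 2) ^ ((1 - ε)/2)
            = t n ^ ((1-ε)/2) * θ (t n) ^ (1 - ε) := by
          rw [Real.mul_rpow hx0 (by positivity), ← Real.rpow_natCast (θ (t n)) 2,
            ← Real.rpow_mul hy0]
          rw [show ((2:ℕ):ℝ) * ((1 - ε)/2) = 1 - ε by push_cast; ring]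
        have step1 : t n ^ ε * θ (t n) ^ (1 - ε) ≤ t n ^ ((1-ε)/2) * θ (t n) ^ (1 - ε) := by
          apply mul_le_mul_of_nonneg_right _ (Real.rpow_nonneg hy0 _)
          exact Real.rpow_le_rpow_of_exponent_le hx1 (by linarith)
        have step2 : (t n * θ (t n) ^ 2) ^ ((1 - ε)/2) ≤ (((n:ℝ) + 1)⁻¹) ^ ((1 - ε)/2) := by
          apply Real.rpow_le_rpow (by positivity) (ht2 n).le (by linarith)
        calc t n ^ ε * θ (t n) ^ (1 - ε) ≤ t n ^ ((1-ε)/2) * θ (t n) ^ (1 - ε) := step1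
          _ = (t n * θ (t n) ^ 2) ^ ((1 - ε)/2) := key1.symm
          _ ≤ (((n:ℝ) + 1)⁻¹) ^ ((1 - ε)/2) := step2
      have hlb : ∀ n : ℕ, 0 ≤ t n ^ ε * θ (t n) ^ (1 - ε) := by
        intro n
        have hx0 : (0:ℝ) ≤ t n := le_trans (by positivity) (ht1 n)
        exact mul_nonneg (Real.rpow_nonneg hx0 _) (Real.rpow_nonneg (hθ0 _ hx0) _)
      refine tendsto_of_tendsto_of_tendsto_of_le_of_le tendsto_const_nhds ?_ hlb hub
      have heq : ∀ n : ℕ, (((n:ℝ) + 1)⁻¹) ^ ((1 - ε)/2) = ((((n:ℝ) + 1)) ^ ((1 - ε)/2))⁻¹ :=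
        fun n => Real.inv_rpow (by positivity) _
      simp only [heq]
      have h1 : Tendsto (fun n : ℕ => (((n:ℝ) + 1)) ^ ((1 - ε)/2)) atTop atTop :=
        (tendsto_rpow_atTop (by linarith)).comp
          (tendsto_atTop_add_const_right _ _ tendsto_natCast_atTop_atTop)
      exact h1.inv_tendsto_atTop
  · push_neg at hB
    have hunb : ∀ M : ℝ, ∃ t, 0 ≤ t ∧ M < F t := by
      intro M
      obtain ⟨t, ht0, hFt⟩ := hB M
      exact ⟨t, ht0, hFt⟩
    exfalso
    clear hdiff hint hcont hder hCb hB hI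
    have hε1 : ε < 1 := by linarith
    have h1ε : (0:ℝ) < 1 - ε := by linarith
    -- choose T₁
    obtain ⟨t₀, ht₀0, ht₀⟩ := hunb C₁
    set T₁ : ℝ := max t₀ (max (T + 1) 1) with hT₁
    have hT₁1 : (1:ℝ) ≤ T₁ := le_trans (le_max_right _ _) (le_max_right _ _)
    have hT₁0 : (0:ℝ) < T₁ := lt_of_lt_of_le one_pos hT₁1
    have hT₁T : T < T₁ := lt_of_lt_of_le (by linarith) (le_trans (le_max_left _ _) (le_max_right _ _))
    have hFT₁ : C₁ < F T₁ := lt_of_lt_of_le ht₀ (hmono _ _ ht₀0 (le_max_left _ _))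
    set H : ℝ → ℝ := fun t => F t - C₁ with hH
    have hHpos : ∀ t : ℝ, T₁ ≤ t → 0 < H t := fun t ht => by
      have := hmono T₁ t hT₁0.le ht
      simp only [hH]; linarith
    -- C₂ > 0
    have hC₂ : 0 < C₂ := by
      by_contra hc
      push_neg at hc
      have h1 := hIF T₁ hT₁T
      have h2 : C₂ * (T₁ ^ ε * θ T₁ ^ (1 - ε)) ≤ 0 :=
        mul_nonpos_of_nonpos_of_nonneg hc
          (mul_nonneg (Real.rpow_nonneg hT₁0.le _) (Real.rpow_nonneg (hθ0 _ hT₁0.le) _))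
      have := hHpos T₁ le_rfl
      simp only [hH] at this
      nlinarith
    set p : ℝ := 2 / (1 - ε) with hp
    have hp2 : 2 < p := by
      rw [hp, lt_div_iff₀ h1ε]; nlinarith
    have hp0 : 0 < p := by linarith
    set q : ℝ := p - 1 with hq
    have hq1 : 1 < q := by linarith
    have hq0 : 0 < q := by linarith
    set a : ℝ := ε * p with ha
    have ha0 : 0 < a := mul_pos hε0 hp0
    have ha1 : a < 1 := by
      rw [ha, hp, ← mul_div_assoc, div_lt_one h1ε]
      linarith
    have hC₂p : 0 < C₂ ^ p := Real.rpow_pos_of_pos hC₂ _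
    -- key pointwise lower bound on θ²
    have hkey : ∀ t : ℝ, T₁ ≤ t → H t ^ p / (C₂ ^ p * t ^ a) ≤ θ t ^ 2 := by
      intro t ht
      have ht0 : (0:ℝ) < t := lt_of_lt_of_le hT₁0 ht
      have htε : (0:ℝ) < t ^ ε := Real.rpow_pos_of_pos ht0 _
      have hHt : 0 < H t := hHpos t ht
      have h1 : H t ≤ C₂ * t ^ ε * θ t ^ (1 - ε) := by
        have := hIF t (lt_of_lt_of_le hT₁T ht)
        simp only [hH]; linarith
      have hθpos : 0 < θ t ^ (1 - ε) := by
        rcases lt_or_ge 0 (θ t ^ (1 - ε)) with h | h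
        · exact h
        · nlinarith [mul_pos hC₂ htε]
      have h2 : H t / (C₂ * t ^ ε) ≤ θ t ^ (1 - ε) := by
        rw [div_le_iff₀ (by positivity)]
        nlinarith
      have h3 : (H t / (C₂ * t ^ ε)) ^ p ≤ (θ t ^ (1 - ε)) ^ p :=
        Real.rpow_le_rpow (by positivity) h2 hp0.le
      have h4 : (θ t ^ (1 - ε)) ^ p = θ t ^ 2 := by
        rw [← Real.rpow_natCast (θ t) 2, ← Real.rpow_mul (hθ0 t ht0.le)]
        congr 1
        push_cast
        rw [mul_comm, div_mul_cancel₀ _ (ne_of_gt h1ε)]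
      have h5 : (H t / (C₂ * t ^ ε)) ^ p = H t ^ p / (C₂ ^ p * t ^ a) := by
        rw [Real.div_rpow hHt.le (by positivity), Real.mul_rpow hC₂.le htε.le,
          ← Real.rpow_mul ht0.le, ha]
      rw [h4] at h3
      rw [h5] at h3
      exact h3
    -- comparison function
    set c : ℝ := q / (C₂ ^ p * (1 - a)) with hc
    have hc0 : 0 < c := by
      apply div_pos hq0
      apply mul_pos hC₂p
      linarith
    set G : ℝ → ℝ := fun t => H t ^ (-q) + c * t ^ (1 - a) with hG
    have hGd : ∀ t : ℝ, T₁ ≤ t →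
        HasDerivAt G (θ t ^ 2 * (-q) * H t ^ (-q - 1) + c * ((1 - a) * t ^ (1 - a - 1))) t := by
      intro t ht
      have ht0 : (0:ℝ) < t := lt_of_lt_of_le hT₁0 ht
      have hH' : HasDerivAt H (θ t ^ 2) t := (hFTC t ht0).sub_const C₁
      have h1 : HasDerivAt (fun u => H u ^ (-q)) (θ t ^ 2 * (-q) * H t ^ (-q - 1)) t :=
        hH'.rpow_const (Or.inl (hHpos t ht).ne')
      have h2 : HasDerivAt (fun u : ℝ => c * u ^ (1 - a)) (c * ((1 - a) * t ^ (1 - a - 1))) t :=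
        (Real.hasDerivAt_rpow_const (Or.inl ht0.ne')).const_mul c
      exact h1.add h2
    have hGd0 : ∀ t : ℝ, T₁ ≤ t →
        θ t ^ 2 * (-q) * H t ^ (-q - 1) + c * ((1 - a) * t ^ (1 - a - 1)) ≤ 0 := by
      intro t ht
      have ht0 : (0:ℝ) < t := lt_of_lt_of_le hT₁0 ht
      have hHt := hHpos t ht
      have hkey' := hkey t ht
      have hpow : 0 < H t ^ (-q - 1) := Real.rpow_pos_of_pos hHt _
      have hta : 0 < t ^ a := Real.rpow_pos_of_pos ht0 _
      have e1 : H t ^ p * H t ^ (-q - 1) = 1 := by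
        rw [← Real.rpow_add hHt, show p + (-q - 1) = 0 by rw [hq]; ring]
        exact Real.rpow_zero _
      have e2 : c * (1 - a) = q / C₂ ^ p := by
        rw [hc]
        field_simp [ne_of_gt hC₂p, ne_of_gt (show (0:ℝ) < 1 - a by linarith)]
      have e3 : t ^ (1 - a - 1) = (t ^ a)⁻¹ := by
        rw [show (1:ℝ) - a - 1 = -a by ring, Real.rpow_neg ht0.le]
      have m1 : H t ^ p / (C₂ ^ p * t ^ a) * (q * H t ^ (-q - 1))
          ≤ θ t ^ 2 * (q * H t ^ (-q - 1)) :=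
        mul_le_mul_of_nonneg_right hkey' (by positivity)
      have m2 : H t ^ p / (C₂ ^ p * t ^ a) * (q * H t ^ (-q - 1)) = q / C₂ ^ p * (t ^ a)⁻¹ := by
        rw [div_mul_eq_mul_div,
          show H t ^ p * (q * H t ^ (-q - 1)) = q * (H t ^ p * H t ^ (-q - 1)) by ring,
          e1, mul_one]
        field_simp
      have m3 : q / C₂ ^ p * (t ^ a)⁻¹ ≤ θ t ^ 2 * (q * H t ^ (-q - 1)) := m2 ▸ m1
      rw [e3]
      have e4 : c * ((1 - a) * (t ^ a)⁻¹) = q / C₂ ^ p * (t ^ a)⁻¹ := by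
        rw [← e2]; ring
      rw [e4]
      linarith [m3]
    have hanti : AntitoneOn G (Set.Ici T₁) := by
      apply antitoneOn_of_deriv_nonpos (convex_Ici T₁)
      · exact fun x hx => ((hGd x hx).continuousAt).continuousWithinAt
      · intro x hx
        rw [interior_Ici] at hx
        exact (hGd x hx.le).differentiableAt.differentiableWithinAt
      · intro x hx
        rw [interior_Ici] at hx
        rw [(hGd x hx.le).deriv]
        exact hGd0 x hx.le
    -- final contradiction
    set K : ℝ := H T₁ ^ (-q) + c * T₁ ^ (1 - a) with hK
    have hK0 : 0 < K := by
      have h1 : 0 < H T₁ ^ (-q) := Real.rpow_pos_of_pos (hHpos T₁ le_rfl) _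
      have h2 : 0 < T₁ ^ (1 - a) := Real.rpow_pos_of_pos hT₁0 _
      nlinarith
    set t₂ : ℝ := max T₁ ((K / c + 1) ^ (1 / (1 - a))) with ht₂def
    have ht₂ : T₁ ≤ t₂ := le_max_left _ _
    have ht₂0 : 0 < t₂ := lt_of_lt_of_le hT₁0 ht₂
    have h1 : G t₂ ≤ G T₁ := hanti (Set.self_mem_Ici) ht₂ ht₂
    have h2 : c * t₂ ^ (1 - a) ≤ K := by
      have h3 : 0 < H t₂ ^ (-q) := Real.rpow_pos_of_pos (hHpos t₂ ht₂) _
      simp only [hG, hK] at h1 ⊢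
      linarith
    have hb : (0:ℝ) ≤ K / c + 1 := by positivity
    have h3 : K / c + 1 ≤ t₂ ^ (1 - a) := by
      have h4 : ((K / c + 1) ^ (1 / (1 - a))) ^ (1 - a) ≤ t₂ ^ (1 - a) :=
        Real.rpow_le_rpow (Real.rpow_nonneg hb _) (le_max_right _ _) (by linarith)
      rwa [← Real.rpow_mul hb, one_div_mul_cancel (show (1:ℝ) - a ≠ 0 by linarith),
        Real.rpow_one] at h4
    have h5 : c * (K / c + 1) ≤ K :=
      le_trans (mul_le_mul_of_nonneg_left h3 hc0.le) h2
    have h6 : c * (K / c + 1) = K + c := by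
      field_simp
    linarith
end

section
/- Fix M > 0 and p = 3, and let g(r_*) be the Morawetz weight (nonnegative for r ≥ 3M, nonpositive for r ≤ 3M, with g' > 0). Then for all r ∈ (2M, ∞): 2 r g(r_*)(1 - 3M/r) + r² g'(r_*) ≥ 0, i.e. the r_*-derivative of r² g (1-2M/r)^{-2/(p-1)} multiplied by (1-2M/r)^{2/(p-1)} is nonnegative. -/
/-- For `p = 3`: if the Morawetz weight `g` (as a function of `r`, via the tortoise
coordinate) is nonpositive for `r ≤ 3M`, nonnegative for `r ≥ 3M`, and `g' > 0`, then
`2 r g (1 - 3M/r) + r² g' ≥ 0` for all `r ∈ (2M, ∞)`. -/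
theorem stmt17 (M : ℝ) (hM : 0 < M) (g g' : ℝ → ℝ)
    (hneg : ∀ r : ℝ, r ≤ 3 * M → g r ≤ 0)
    (hpos : ∀ r : ℝ, 3 * M ≤ r → 0 ≤ g r)
    (hg' : ∀ r : ℝ, 0 < g' r) :
    ∀ r : ℝ, 2 * M < r → 0 ≤ 2 * r * g r * (1 - 3 * M / r) + r ^ 2 * g' r := by
  intro r hr
  have hr0 : 0 < r := lt_trans (by linarith) hr
  have h2 : 0 ≤ r ^ 2 * g' r := le_of_lt (mul_pos (by positivity) (hg' r))
  have h1 : 0 ≤ 2 * r * g r * (1 - 3 * M / r) := by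
    rcases le_total r (3 * M) with h | h
    · have hg : g r ≤ 0 := hneg r h
      have : 1 - 3 * M / r ≤ 0 := by
        rw [sub_nonpos, le_div_iff₀ hr0]; linarith
      have h2rg : 2 * r * g r ≤ 0 := by nlinarith
      nlinarith [mul_nonneg (neg_nonneg.mpr h2rg) (neg_nonneg.mpr this)]
    · have hg : 0 ≤ g r := hpos r h
      have : 0 ≤ 1 - 3 * M / r := by
        rw [sub_nonneg, div_le_one hr0]; linarith
      exact mul_nonneg (by positivity) this
  linarith
end
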